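/- arXiv:cs/0309044 — 2 statements merged into one kernel-verified Lean document; each statement's English description precedes it below -/
import Mathlib

section
/- Let G be a finite tree with at least two vertices (so G is connected and contains no cycle), and let ω0 be any acyclic orientation of G. With p an eventual period of the synchronous edge-reversal sequence from ω0 and m the common number of times each vertex is a sink per period, m/p = 1/2; that is, Conc(ω0) = 1/2. -/
variable {V : Type*}

/-- `o` is an orientation of the simple graph `G`: it assigns a direction to each
edge of `G` (for adjacent `u, v`, exactly one of `o u v`, `o v u` holds) and relates
no other pairs. -/
def IsOrientation (G : SimpleGraph V) (o : V → V → Prop) : Prop :=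
  ∀ u v, (o u v → G.Adj u v) ∧ (G.Adj u v → (o u v ↔ ¬ o v u))

/-- A sink of an orientation: a vertex with no outgoing edge (every incident edge is
directed toward it). -/
def IsSink (o : V → V → Prop) (v : V) : Prop := ∀ u, ¬ o v u

/-- A directed graph (or orientation) is acyclic when it has no directed cycle. -/
def DirAcyclic (o : V → V → Prop) : Prop := ∀ v, ¬ Relation.TransGen o v v

/-- The synchronous edge-reversal step: every edge incident to a sink is reversed
(every sink becomes a source); all other edges keep their direction. -/
def revStep (o : V → V → Prop) : V → V → Prop :=
  fun u v => (o u v ∧ ¬ IsSink o v) ∨ (o v u ∧ IsSink o u)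

/-- The sequence of orientations produced by synchronous edge reversal:
`orientSeq ω0 s` is the result of `s` edge-reversal steps applied to `ω0`. -/
def orientSeq (ω0 : V → V → Prop) (s : ℕ) : V → V → Prop := revStep^[s] ω0

/-!
An orientation of a tree is the descent direction of an integer height function: every edge goes
down by one. Reversing the edges at the sinks (the local minima) amounts to raising them by two,
so the heights can be carried along the edge-reversal sequence. The global minimum then rises by
exactly one per step: the minimal vertices are sinks and rise by two, and each of them has a
neighbour one above it that is not a sink and stays put. Over a window of `p` steps in which
every vertex is a sink `m` times, every height, hence the minimum, rises by `2m`; so `p = 2m`.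
-/

open SimpleGraph Finset

section Orientation

variable {G : SimpleGraph V} {o : V → V → Prop}

lemma orientSeq_succ (ω0 : V → V → Prop) (t : ℕ) :
    orientSeq ω0 (t + 1) = revStep (orientSeq ω0 t) :=
  Function.iterate_succ_apply' _ _ _

lemma IsOrientation.revStep (hor : IsOrientation G o) : IsOrientation G (revStep o) := by
  refine fun u v => ⟨?_, fun huv => ?_⟩
  · rintro (⟨h, -⟩ | ⟨h, -⟩)
    exacts [(hor u v).1 h, ((hor v u).1 h).symm]
  · have huv' := (hor u v).2 huv
    have hsu : o u v → ¬ IsSink o u := fun h hs => hs v h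
    have hsv : o v u → ¬ IsSink o v := fun h hs => hs u h
    simp only [_root_.revStep]
    tauto

lemma IsOrientation.orientSeq (hor : IsOrientation G o) (t : ℕ) :
    IsOrientation G (orientSeq o t) := by
  induction t with
  | zero => exact hor
  | succ t ih => rw [orientSeq_succ]; exact ih.revStep

end Orientation

section Height

variable {G : SimpleGraph V} {o : V → V → Prop} {h : V → ℤ}

def IsHeight (o : V → V → Prop) (h : V → ℤ) : Prop := ∀ ⦃u v⦄, o u v → h u = h v + 1

lemma IsHeight.adj (hh : IsHeight o h) (hor : IsOrientation G o) {u v : V} (huv : G.Adj u v) :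
    o u v ∧ h u = h v + 1 ∨ o v u ∧ h v = h u + 1 := by
  by_cases h' : o u v
  · exact .inl ⟨h', hh h'⟩
  · have hvu := ((hor v u).2 huv.symm).2 h'
    exact .inr ⟨hvu, hh hvu⟩

open Classical in
noncomputable def raiseSinks (o : V → V → Prop) (h : V → ℤ) (v : V) : ℤ :=
  h v + if IsSink o v then 2 else 0

lemma IsHeight.revStep (hh : IsHeight o h) : IsHeight (revStep o) (raiseSinks o h) := by
  rintro u v (⟨huv, hv⟩ | ⟨hvu, hu⟩)
  · have hu : ¬ IsSink o u := fun hu => hu v huv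
    simp [raiseSinks, hu, hv, hh huv]
  · have hv : ¬ IsSink o v := fun hv => hv u hvu
    simp only [raiseSinks, hu, hv, hh hvu, if_true, if_false]
    ring

lemma IsHeight.inf'_raiseSinks [Fintype V] [Nonempty V] (hh : IsHeight o h)
    (hor : IsOrientation G o) (hG : ∀ v, ¬ G.IsIsolated v) :
    univ.inf' univ_nonempty (raiseSinks o h) = univ.inf' univ_nonempty h + 1 := by
  have hle (w : V) : univ.inf' univ_nonempty h ≤ h w := inf'_le h (mem_univ w)
  apply le_antisymm
  · obtain ⟨v, -, hv⟩ := exists_mem_eq_inf' univ_nonempty h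
    obtain ⟨u, hvu⟩ := exists_adj_iff_not_isIsolated.mpr (hG v)
    rcases hh.adj hor hvu with ⟨-, hv_above⟩ | ⟨huv, hu⟩
    · linarith [hle u]
    · have hu_sink : ¬ IsSink o u := fun hs => hs v huv
      have := inf'_le (raiseSinks o h) (mem_univ u)
      simp only [raiseSinks, hu_sink, if_false] at this
      omega
  · refine le_inf' _ _ fun v _ => ?_
    by_cases hv : IsSink o v
    · simp only [raiseSinks, hv, if_true]
      linarith [hle v]
    · obtain ⟨u, hvu⟩ : ∃ u, o v u := by simpa [IsSink] using hv
      simp only [raiseSinks, hv, if_false]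
      linarith [hle u, hh hvu]

noncomputable def heightSeq (ω0 : V → V → Prop) (h : V → ℤ) : ℕ → V → ℤ
  | 0 => h
  | t + 1 => raiseSinks (orientSeq ω0 t) (heightSeq ω0 h t)

lemma IsHeight.heightSeq {ω0 : V → V → Prop} (hh : IsHeight ω0 h) (t : ℕ) :
    IsHeight (orientSeq ω0 t) (heightSeq ω0 h t) := by
  induction t with
  | zero => exact hh
  | succ t ih => rw [_root_.heightSeq, orientSeq_succ]; exact ih.revStep

lemma heightSeq_add (ω0 : V → V → Prop) (h : V → ℤ) (a k : ℕ) (v : V) :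
    heightSeq ω0 h (a + k) v =
      heightSeq ω0 h a v + 2 * {s ∈ Set.Ico a (a + k) | IsSink (orientSeq ω0 s) v}.ncard := by
  classical
  have hfin (b : ℕ) : {s ∈ Set.Ico a b | IsSink (orientSeq ω0 s) v} =
      ↑({s ∈ Finset.Ico a b | IsSink (orientSeq ω0 s) v}) := by
    ext; simp
  simp only [hfin, Set.ncard_coe_finset]
  induction k with
  | zero => simp
  | succ k ih =>
    rw [← add_assoc, heightSeq, raiseSinks, ih, Nat.Ico_succ_right_eq_insert_Ico (by omega),
      filter_insert]
    split_ifs with hs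
    · rw [card_insert_of_notMem (by simp)]
      push_cast
      ring
    · simp

end Height

namespace SimpleGraph

variable {G : SimpleGraph V}

open Classical in
noncomputable def edgeRise (o : V → V → Prop) (u v : V) : ℤ := if o u v then -1 else 1

noncomputable def Walk.rise (o : V → V → Prop) {u v : V} (p : G.Walk u v) : ℤ :=
  (p.darts.map fun d => edgeRise o d.fst d.snd).sum

lemma Walk.rise_concat (o : V → V → Prop) {u v w : V} (p : G.Walk u v) (h : G.Adj v w) :
    (p.concat h).rise o = p.rise o + edgeRise o v w := by
  simp [Walk.rise, Walk.darts_concat]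

lemma IsAcyclic.rise_of_adj (hG : G.IsAcyclic) (o : V → V → Prop) {r u v : V}
    {P : G.Walk r u} (hP : P.IsPath) {Q : G.Walk r v} (hQ : Q.IsPath) (huv : G.Adj u v) :
    Q.rise o = P.rise o + edgeRise o u v ∨ P.rise o = Q.rise o + edgeRise o v u := by
  by_cases hv : v ∈ P.support
  · rw [hG.path_concat hQ hP huv.symm hv, Walk.rise_concat]
    exact .inr rfl
  · have hu : u ∈ Q.support := hG.mem_support_of_ne_mem_support_of_adj_of_isPath hQ hP huv.symm hv
    rw [hG.path_concat hP hQ huv hu, Walk.rise_concat]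
    exact .inl rfl

lemma IsTree.exists_isHeight (hT : G.IsTree) {o : V → V → Prop} (hor : IsOrientation G o) :
    ∃ h, IsHeight o h := by
  classical
  obtain ⟨r⟩ := hT.connected.nonempty
  let P (x : V) : G.Walk r x := (hT.connected.preconnected r x).some.bypass
  refine ⟨fun x => (P x).rise o, fun u v huv => ?_⟩
  have hvu : ¬ o v u := ((hor u v).2 ((hor u v).1 huv)).1 huv
  show (P u).rise o = (P v).rise o + 1
  rcases hT.isAcyclic.rise_of_adj o (P := P u) (Q := P v) (Walk.bypass_isPath _)
      (Walk.bypass_isPath _) ((hor u v).1 huv) with h | h <;>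
    simp only [edgeRise, huv, hvu, if_true, if_false] at h <;> omega

end SimpleGraph

theorem tree_edge_reversal_concurrency_half_general [Fintype V]
    (G : SimpleGraph V) (hT : G.IsTree) (hcard : 2 ≤ Fintype.card V)
    (ω0 : V → V → Prop) (hor : IsOrientation G ω0)
    (s0 p m : ℕ) (hp : 0 < p)
    (hm : ∀ v : V, {s ∈ Set.Ico s0 (s0 + p) | IsSink (orientSeq ω0 s) v}.ncard = m) :
    (m : ℚ) / (p : ℚ) = 1 / 2 := by
  have : Nontrivial V := Fintype.one_lt_card_iff_nontrivial.mp hcard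
  obtain ⟨h, hh⟩ := hT.exists_isHeight hor
  let μ (t : ℕ) : ℤ := univ.inf' univ_nonempty (heightSeq ω0 h t)
  have hμ_succ (t : ℕ) : μ (t + 1) = μ t + 1 :=
    (hh.heightSeq t).inf'_raiseSinks (hor.orientSeq t) hT.connected.preconnected.not_isIsolated
  have hμ_add (k : ℕ) : μ (s0 + k) = μ s0 + k := by
    induction k with
    | zero => simp
    | succ k ih => rw [← add_assoc, hμ_succ, ih]; push_cast; ring
  have hμ_period : μ (s0 + p) = μ s0 + 2 * m := by
    have hshift : heightSeq ω0 h (s0 + p) = fun v => heightSeq ω0 h s0 v + 2 * m := by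
      ext v; rw [heightSeq_add, hm]
    simp only [μ, hshift]
    exact (apply_inf'_eq_inf'_comp univ_nonempty (· + 2 * (m : ℤ))
      fun x y => (min_add_add_right x y _).symm).symm
  have hpm : p = 2 * m := by have := hμ_add p; omega
  have hm0 : (m : ℚ) ≠ 0 := by exact_mod_cast (show m ≠ 0 by omega)
  rw [hpm, Nat.cast_mul, Nat.cast_ofNat]
  field_simp

/-- On a finite tree with at least two vertices, every edge-reversal computation has
concurrency `Conc(ω0) = m/p = 1/2`, where `p` is an eventual period of the sequence of
orientations and `m` is the common number of times each vertex is a sink per period. -/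
theorem tree_edge_reversal_concurrency_half [Fintype V]
    (G : SimpleGraph V) (hT : G.IsTree) (hcard : 2 ≤ Fintype.card V)
    (ω0 : V → V → Prop) (hor : IsOrientation G ω0) (hacy : DirAcyclic ω0)
    (s0 p m : ℕ) (hp : 0 < p)
    (hper : ∀ s, s0 ≤ s → orientSeq ω0 (s + p) = orientSeq ω0 s)
    (hm : ∀ v : V, {s ∈ Set.Ico s0 (s0 + p) | IsSink (orientSeq ω0 s) v}.ncard = m) :
    (m : ℚ) / (p : ℚ) = 1 / 2 :=
  tree_edge_reversal_concurrency_half_general G hT hcard ω0 hor s0 p m hp hm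
end

section
/- In the bead-reversal setting on G, for every simple cycle κ of G, the quantities σ+(κ) and σ−(κ) (and hence σ(κ) = max(σ+(κ), σ−(κ))) are unchanged by a bead-reversal step performed at any enabled vertex; ρ(κ) is likewise time-invariant. -/
variable {V : Type*}

attribute [local instance] Classical.propDecidable

/-- `a` is a bead configuration on `G` (with bead numbers `r`): `a u v` is the number
of beads at `u`'s end of the edge `{u, v}`; each edge `{u, v}` carries
`e_uv = r u + r v − gcd (r u) (r v)` beads in total, and every bead count is a
multiple of `gcd (r u) (r v)`. -/
def IsBeadConfig (G : SimpleGraph V) (r : V → ℕ) (a : V → V → ℕ) : Prop :=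
  ∀ u v, G.Adj u v →
    a u v + a v u = r u + r v - Nat.gcd (r u) (r v) ∧ Nat.gcd (r u) (r v) ∣ a u v

/-- A vertex `v` is enabled when every edge incident to `v` carries at least `r v`
beads at `v`'s end. -/
def Enabled (G : SimpleGraph V) (r : V → ℕ) (a : V → V → ℕ) (v : V) : Prop :=
  ∀ u, G.Adj v u → r v ≤ a v u

/-- The bead-reversal step at vertex `v`: `r v` beads are moved from `v`'s end to the
opposite end of every edge incident to `v`. -/
noncomputable def beadStep (G : SimpleGraph V) (r : V → ℕ) (a : V → V → ℕ) (v : V) :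
    V → V → ℕ :=
  fun x y =>
    if x = v ∧ G.Adj v y then a x y - r v
    else if y = v ∧ G.Adj v x then a x y + r v
    else a x y

/-- `σ⁺(κ)`: the sum, over the edges of the cycle `κ` traversed as `u → v` along the
traversal direction of `κ`, of the number of beads at `v`'s end. -/
def sigmaPlus {G : SimpleGraph V} {w : V} (a : V → V → ℕ) (κ : G.Walk w w) : ℕ :=
  (κ.darts.map (fun d => a d.toProd.2 d.toProd.1)).sum

/-- `σ⁻(κ)`: the sum, over the edges of the cycle `κ` traversed as `u → v` along the
traversal direction opposite to that of `κ`, of the number of beads at `u`'s end. -/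
def sigmaMinus {G : SimpleGraph V} {w : V} (a : V → V → ℕ) (κ : G.Walk w w) : ℕ :=
  (κ.darts.map (fun d => a d.toProd.1 d.toProd.2)).sum

/-- `ρ(κ)`: the sum of `r v` over the vertices `v` of the cycle `κ`. -/
def rho {G : SimpleGraph V} {w : V} (r : V → ℕ) (κ : G.Walk w w) : ℕ :=
  (κ.support.tail.map r).sum

/-!
A step at `v` moves `r v` beads along every edge at `v`, from `v`'s end to the far end. So on a
dart `(x, y)` of a closed walk the count at `x`'s end changes by `φ y - φ x`, where
`φ = r v · 𝟙_{v}`, and around the walk these differences telescope to zero. Reversing the walk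
exchanges `σ⁺` and `σ⁻`.
-/

namespace SimpleGraph.Walk

theorem sum_darts_map_sub {G : SimpleGraph V} {β : Type*} [AddCommGroup β] (φ : V → β)
    {u w : V} (p : G.Walk u w) :
    (p.darts.map fun d => φ d.toProd.2 - φ d.toProd.1).sum = φ w - φ u := by
  induction p with
  | nil => simp
  | cons _ p ih =>
    rw [darts_cons, List.map_cons, List.sum_cons, ih]
    abel

theorem sum_darts_eq_of_cast_eq_add_sub {G : SimpleGraph V} {u : V} (p : G.Walk u u)
    (f g : G.Dart → ℕ) (φ : V → ℤ)
    (h : ∀ d ∈ p.darts, (g d : ℤ) = f d + (φ d.toProd.2 - φ d.toProd.1)) :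
    (p.darts.map g).sum = (p.darts.map f).sum := by
  apply Nat.cast_injective (R := ℤ)
  simp only [Nat.cast_list_sum, List.map_map, Function.comp_def]
  rw [List.map_congr_left h, List.sum_map_add, sum_darts_map_sub, sub_self, add_zero]

end SimpleGraph.Walk

theorem sigmaPlus_eq_sigmaMinus_reverse {G : SimpleGraph V} {w : V} (a : V → V → ℕ)
    (κ : G.Walk w w) : sigmaPlus a κ = sigmaMinus a κ.reverse := by
  simp only [sigmaPlus, sigmaMinus, SimpleGraph.Walk.darts_reverse, List.map_reverse,
    List.sum_reverse, List.map_map, Function.comp_def, SimpleGraph.Dart.symm_toProd,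
    Prod.fst_swap, Prod.snd_swap]

theorem beadStep_cast_of_adj {G : SimpleGraph V} {r : V → ℕ} {a : V → V → ℕ} {v : V}
    (hen : Enabled G r a v) {x y : V} (hxy : G.Adj x y) :
    (beadStep G r a v x y : ℤ) =
      a x y + ((if y = v then (r v : ℤ) else 0) - if x = v then (r v : ℤ) else 0) := by
  by_cases hx : x = v
  · subst hx
    simp [beadStep, hxy, hxy.ne', Nat.cast_sub (hen y hxy), sub_eq_add_neg]
  · by_cases hy : y = v
    · subst hy
      simp [beadStep, hx, hxy.symm]
    · simp [beadStep, hx, hy]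

theorem sigmaMinus_beadStep {G : SimpleGraph V} {r : V → ℕ} {a : V → V → ℕ} {v : V}
    (hen : Enabled G r a v) {w : V} (κ : G.Walk w w) :
    sigmaMinus (beadStep G r a v) κ = sigmaMinus a κ :=
  κ.sum_darts_eq_of_cast_eq_add_sub _ _ (fun x => if x = v then (r v : ℤ) else 0)
    fun d _ => beadStep_cast_of_adj hen d.adj

theorem sigmaPlus_beadStep {G : SimpleGraph V} {r : V → ℕ} {a : V → V → ℕ} {v : V}
    (hen : Enabled G r a v) {w : V} (κ : G.Walk w w) :
    sigmaPlus (beadStep G r a v) κ = sigmaPlus a κ := by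
  rw [sigmaPlus_eq_sigmaMinus_reverse, sigmaPlus_eq_sigmaMinus_reverse, sigmaMinus_beadStep hen]

theorem bead_step_sigma_invariant_general
    (G : SimpleGraph V)
    (r : V → ℕ)
    (a : V → V → ℕ)
    (v : V) (hen : Enabled G r a v) :
    ∀ (w : V) (κ : G.Walk w w), κ.IsCycle →
      sigmaPlus (beadStep G r a v) κ = sigmaPlus a κ ∧
      sigmaMinus (beadStep G r a v) κ = sigmaMinus a κ ∧
      max (sigmaPlus (beadStep G r a v) κ) (sigmaMinus (beadStep G r a v) κ) =
        max (sigmaPlus a κ) (sigmaMinus a κ) := by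
  intro w κ _
  have hplus := sigmaPlus_beadStep hen κ
  have hminus := sigmaMinus_beadStep hen κ
  exact ⟨hplus, hminus, by rw [hplus, hminus]⟩

/-- For every simple cycle `κ` of `G`, the quantities `σ⁺(κ)` and `σ⁻(κ)` (and hence
`σ(κ) = max (σ⁺(κ)) (σ⁻(κ))`) are unchanged by a bead-reversal step performed at any
enabled vertex (and `ρ(κ)`, which does not depend on the configuration, is likewise
time-invariant). -/
theorem bead_step_sigma_invariant [Fintype V]
    (G : SimpleGraph V) (hG : G.Connected)
    (r : V → ℕ) (hr : ∀ v, 0 < r v)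
    (a : V → V → ℕ) (hconf : IsBeadConfig G r a)
    (v : V) (hen : Enabled G r a v) :
    ∀ (w : V) (κ : G.Walk w w), κ.IsCycle →
      sigmaPlus (beadStep G r a v) κ = sigmaPlus a κ ∧
      sigmaMinus (beadStep G r a v) κ = sigmaMinus a κ ∧
      max (sigmaPlus (beadStep G r a v) κ) (sigmaMinus (beadStep G r a v) κ) =
        max (sigmaPlus a κ) (sigmaMinus a κ) :=
  bead_step_sigma_invariant_general G r a v hen
end
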